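/- Let f : ℝⁿ → ℝ be L₀-Lipschitz and η > 0. Define the esGs gradient estimator g_η(x, V, Z) ∈ ℝⁿ componentwise by g_η^i(x, V, Z) = (1/(η√(2π)))[f(x_i + η√(2V), x^{-i} - Z^{-i}) - f(x_i - η√(2V), x^{-i} - Z^{-i})], where V ~ Exp(1) and Z ~ 𝒩(0, η²I). Then E[‖g_η(x, V, Z)‖²] ≤ (4/π) L₀² n. -/

import Mathlib

open MeasureTheory

/-- The density of the Gaussian `𝒩(0, η²I)` on `ℝⁿ`. -/
noncomputable def gaussPdf (n : ℕ) (η : ℝ) (z : EuclideanSpace ℝ (Fin n)) : ℝ :=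
  (2 * Real.pi * η ^ 2) ^ (-(n : ℝ) / 2) * Real.exp (-‖z‖ ^ 2 / (2 * η ^ 2))

/-- The vector in `ℝⁿ` whose `i`-th coordinate is `a` and whose other coordinates agree
with `w`. -/
noncomputable def updCoord (n : ℕ) (i : Fin n) (a : ℝ)
    (w : EuclideanSpace ℝ (Fin n)) : EuclideanSpace ℝ (Fin n) :=
  (EuclideanSpace.equiv (Fin n) ℝ).symm (Function.update (fun j => w j) i a)

lemma gaussPdf_nonneg (n : ℕ) (η : ℝ) (z : EuclideanSpace ℝ (Fin n)) :
    0 ≤ gaussPdf n η z := by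
  unfold gaussPdf
  have h : (0:ℝ) ≤ 2 * Real.pi * η ^ 2 := by positivity
  positivity

lemma integrable_exp_part (n : ℕ) {η : ℝ} (hη : 0 < η) :
    Integrable (fun z : EuclideanSpace ℝ (Fin n) =>
      Real.exp (-(1 / (2 * η ^ 2)) * ‖z‖ ^ 2)) := by
  have hb : (0:ℝ) < 1 / (2 * η ^ 2) := by positivity
  have h := (GaussianFourier.integrable_cexp_neg_mul_sq_norm_add
    (V := EuclideanSpace ℝ (Fin n)) (b := ((1 / (2 * η ^ 2) : ℝ) : ℂ))
    (by simp only [Complex.ofReal_re]; exact hb) 0 0).norm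
  refine h.congr (Filter.Eventually.of_forall fun z => ?_)
  simp only [Complex.norm_exp]
  congr 1
  have e : (-(((1 / (2 * η ^ 2) : ℝ)) : ℂ) * ((‖z‖ : ℝ) : ℂ) ^ 2
      + 0 * (((inner ℝ (0 : EuclideanSpace ℝ (Fin n)) z : ℝ)) : ℂ))
      = ((-(1 / (2 * η ^ 2)) * ‖z‖ ^ 2 : ℝ) : ℂ) := by
    push_cast
    ring
  rw [e, Complex.ofReal_re]

lemma integrable_gaussPdf (n : ℕ) {η : ℝ} (hη : 0 < η) :
    Integrable (gaussPdf n η) := by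
  have hfun : gaussPdf n η = fun z => (2 * Real.pi * η ^ 2) ^ (-(n : ℝ) / 2) *
      Real.exp (-(1 / (2 * η ^ 2)) * ‖z‖ ^ 2) := by
    funext z
    unfold gaussPdf
    congr 1
    congr 1
    ring
  rw [hfun]
  exact (integrable_exp_part n hη).const_mul _

lemma integral_gaussPdf (n : ℕ) {η : ℝ} (hη : 0 < η) :
    ∫ z : EuclideanSpace ℝ (Fin n), gaussPdf n η z = 1 := by
  have hb : (0:ℝ) < 1 / (2 * η ^ 2) := by positivity
  have h := GaussianFourier.integral_rexp_neg_mul_sq_norm (V := EuclideanSpace ℝ (Fin n)) hb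
  have hint : ∫ z : EuclideanSpace ℝ (Fin n), gaussPdf n η z
      = (2 * Real.pi * η ^ 2) ^ (-(n : ℝ) / 2)
        * ∫ z : EuclideanSpace ℝ (Fin n),
            Real.exp (-(1 / (2 * η ^ 2)) * ‖z‖ ^ 2) := by
    rw [← integral_const_mul]
    congr 1
    funext z
    unfold gaussPdf
    congr 1
    congr 1
    ring
  rw [hint, h]
  have hpos : (0:ℝ) < 2 * Real.pi * η ^ 2 := by positivity
  rw [finrank_euclideanSpace_fin]
  have : Real.pi / (1 / (2 * η ^ 2)) = 2 * Real.pi * η ^ 2 := by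
    field_simp
  rw [this, ← Real.rpow_add hpos]
  have e0 : -(n:ℝ) / 2 + (n:ℝ) / 2 = 0 := by ring
  rw [e0, Real.rpow_zero]

lemma updCoord_sub_updCoord (n : ℕ) (i : Fin n) (p q : ℝ)
    (w : EuclideanSpace ℝ (Fin n)) :
    updCoord n i p w - updCoord n i q w = EuclideanSpace.single i (p - q) := by
  ext j
  simp only [updCoord, PiLp.sub_apply, EuclideanSpace.single_apply,
    EuclideanSpace.equiv, PiLp.coe_symm_continuousLinearEquiv, PiLp.toLp_apply, Function.update_apply]
  by_cases h : j = i <;> simp [h]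

/-- Second moment bound on the esGs gradient estimator: with `V ~ Exp(1)` and
`Z ~ 𝒩(0, η²I)`, the estimator with components
`g_η^i = (1/(η√(2π)))[f(xᵢ + η√(2V), x⁻ⁱ - Z⁻ⁱ) - f(xᵢ - η√(2V), x⁻ⁱ - Z⁻ⁱ)]`
satisfies `E[‖g_η‖²] ≤ (4/π) L₀² n`. -/
theorem esGs_second_moment_bound (n : ℕ) (f : EuclideanSpace ℝ (Fin n) → ℝ) (L₀ η : ℝ)
    (hη : 0 < η) (hL₀ : 0 ≤ L₀)
    (hf : ∀ x y : EuclideanSpace ℝ (Fin n), |f x - f y| ≤ L₀ * ‖x - y‖)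
    (x : EuclideanSpace ℝ (Fin n)) :
    (∫ v in Set.Ioi (0 : ℝ),
      (∫ z : EuclideanSpace ℝ (Fin n),
        (∑ i : Fin n, ((1 / (η * Real.sqrt (2 * Real.pi))) *
          (f (updCoord n i (x i + η * Real.sqrt (2 * v)) (x - z)) -
            f (updCoord n i (x i - η * Real.sqrt (2 * v)) (x - z)))) ^ 2) * gaussPdf n η z) *
      Real.exp (-v)) ≤ 4 / Real.pi * L₀ ^ 2 * n := by
  have hπ : (0:ℝ) < Real.pi := Real.pi_pos
  set b : ℝ := 4 / Real.pi * L₀ ^ 2 with hb_def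
  have hb0 : 0 ≤ b := by positivity
  -- pointwise bound on the sum
  have hsum : ∀ v ∈ Set.Ioi (0:ℝ), ∀ z : EuclideanSpace ℝ (Fin n),
      (∑ i : Fin n, ((1 / (η * Real.sqrt (2 * Real.pi))) *
          (f (updCoord n i (x i + η * Real.sqrt (2 * v)) (x - z)) -
            f (updCoord n i (x i - η * Real.sqrt (2 * v)) (x - z)))) ^ 2)
        ≤ (b * n) * v := by
    intro v hv z
    have hv0 : 0 ≤ v := le_of_lt hv
    have hterm : ∀ i : Fin n,
        ((1 / (η * Real.sqrt (2 * Real.pi))) *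
          (f (updCoord n i (x i + η * Real.sqrt (2 * v)) (x - z)) -
            f (updCoord n i (x i - η * Real.sqrt (2 * v)) (x - z)))) ^ 2
          ≤ b * v := by
      intro i
      set a₁ := updCoord n i (x i + η * Real.sqrt (2 * v)) (x - z)
      set a₂ := updCoord n i (x i - η * Real.sqrt (2 * v)) (x - z)
      have hdist : ‖a₁ - a₂‖ = 2 * η * Real.sqrt (2 * v) := by
        rw [updCoord_sub_updCoord]
        have : x i + η * Real.sqrt (2 * v) - (x i - η * Real.sqrt (2 * v))
            = 2 * (η * Real.sqrt (2 * v)) := by ring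
        rw [this, EuclideanSpace.norm_single, Real.norm_eq_abs,
          abs_of_nonneg (by positivity)]
        ring
      have hfd : |f a₁ - f a₂| ≤ L₀ * (2 * η * Real.sqrt (2 * v)) := by
        calc |f a₁ - f a₂| ≤ L₀ * ‖a₁ - a₂‖ := hf a₁ a₂
          _ = L₀ * (2 * η * Real.sqrt (2 * v)) := by rw [hdist]
      have hsq : (f a₁ - f a₂) ^ 2 ≤ (L₀ * (2 * η * Real.sqrt (2 * v))) ^ 2 := by
        rw [← sq_abs]
        exact pow_le_pow_left₀ (abs_nonneg _) hfd 2
      have hkey : ((1 / (η * Real.sqrt (2 * Real.pi))) * (f a₁ - f a₂)) ^ 2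
          ≤ (1 / (η * Real.sqrt (2 * Real.pi))) ^ 2
            * (L₀ * (2 * η * Real.sqrt (2 * v))) ^ 2 := by
        rw [mul_pow]
        exact mul_le_mul_of_nonneg_left hsq (by positivity)
      refine hkey.trans_eq ?_
      have h2π : Real.sqrt (2 * Real.pi) ^ 2 = 2 * Real.pi :=
        Real.sq_sqrt (by positivity)
      have h2v : Real.sqrt (2 * v) ^ 2 = 2 * v := Real.sq_sqrt (by positivity)
      have hη' : η ≠ 0 := ne_of_gt hη
      have hπ' : Real.pi ≠ 0 := ne_of_gt hπ
      have e1 : (1 / (η * Real.sqrt (2 * Real.pi))) ^ 2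
          = 1 / (η ^ 2 * (2 * Real.pi)) := by
        rw [div_pow, one_pow, mul_pow, h2π]
      have e2 : (L₀ * (2 * η * Real.sqrt (2 * v))) ^ 2
          = L₀ ^ 2 * (4 * η ^ 2 * (2 * v)) := by
        rw [mul_pow, mul_pow, mul_pow, h2v]; ring
      rw [e1, e2, hb_def]
      field_simp
    calc (∑ i : Fin n, ((1 / (η * Real.sqrt (2 * Real.pi))) *
          (f (updCoord n i (x i + η * Real.sqrt (2 * v)) (x - z)) -
            f (updCoord n i (x i - η * Real.sqrt (2 * v)) (x - z)))) ^ 2)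
        ≤ ∑ _i : Fin n, b * v := Finset.sum_le_sum fun i _ => hterm i
      _ = (b * n) * v := by
          rw [Finset.sum_const, Finset.card_univ, Fintype.card_fin, nsmul_eq_mul]
          ring
  -- bound on the inner integral
  have hinner : ∀ v ∈ Set.Ioi (0:ℝ),
      (∫ z : EuclideanSpace ℝ (Fin n),
        (∑ i : Fin n, ((1 / (η * Real.sqrt (2 * Real.pi))) *
          (f (updCoord n i (x i + η * Real.sqrt (2 * v)) (x - z)) -
            f (updCoord n i (x i - η * Real.sqrt (2 * v)) (x - z)))) ^ 2) * gaussPdf n η z)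
        ≤ (b * n) * v := by
    intro v hv
    have hInt : Integrable (fun z : EuclideanSpace ℝ (Fin n) =>
        ((b * n) * v) * gaussPdf n η z) := (integrable_gaussPdf n hη).const_mul _
    calc (∫ z : EuclideanSpace ℝ (Fin n),
        (∑ i : Fin n, ((1 / (η * Real.sqrt (2 * Real.pi))) *
          (f (updCoord n i (x i + η * Real.sqrt (2 * v)) (x - z)) -
            f (updCoord n i (x i - η * Real.sqrt (2 * v)) (x - z)))) ^ 2) * gaussPdf n η z)
        ≤ ∫ z : EuclideanSpace ℝ (Fin n), ((b * n) * v) * gaussPdf n η z := by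
          refine integral_mono_of_nonneg
            (Filter.Eventually.of_forall fun z => ?_) hInt
            (Filter.Eventually.of_forall fun z => ?_)
          · exact mul_nonneg (Finset.sum_nonneg fun i _ => sq_nonneg _)
              (gaussPdf_nonneg n η z)
          · exact mul_le_mul_of_nonneg_right (hsum v hv z) (gaussPdf_nonneg n η z)
      _ = ((b * n) * v) * 1 := by rw [integral_const_mul, integral_gaussPdf n hη]
      _ = (b * n) * v := by ring
  -- the Gamma integral
  have hGamma : ∫ v in Set.Ioi (0:ℝ), v * Real.exp (-v) = 1 := by
    have h := Real.Gamma_eq_integral (s := 2) (by norm_num)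
    have h2 : Real.Gamma 2 = 1 := by
      simpa using Real.Gamma_nat_eq_factorial 1
    have h' : ∫ v in Set.Ioi (0:ℝ), v * Real.exp (-v)
        = ∫ t in Set.Ioi (0:ℝ), Real.exp (-t) * t ^ ((2:ℝ) - 1) := by
      refine setIntegral_congr_fun measurableSet_Ioi fun t ht => ?_
      have : (2:ℝ) - 1 = 1 := by norm_num
      rw [this, Real.rpow_one]; ring
    rw [h', ← h, h2]
  have hGammaInt : IntegrableOn (fun v => (b * n) * (v * Real.exp (-v)))
      (Set.Ioi (0:ℝ)) := by
    have h := Real.GammaIntegral_convergent (s := 2) (by norm_num)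
    have h' : IntegrableOn (fun v => v * Real.exp (-v)) (Set.Ioi (0:ℝ)) := by
      refine h.congr_fun (fun t ht => ?_) measurableSet_Ioi
      have : (2:ℝ) - 1 = 1 := by norm_num
      rw [this]; simp only [Real.rpow_one]; ring
    exact h'.const_mul _
  calc (∫ v in Set.Ioi (0 : ℝ),
      (∫ z : EuclideanSpace ℝ (Fin n),
        (∑ i : Fin n, ((1 / (η * Real.sqrt (2 * Real.pi))) *
          (f (updCoord n i (x i + η * Real.sqrt (2 * v)) (x - z)) -
            f (updCoord n i (x i - η * Real.sqrt (2 * v)) (x - z)))) ^ 2) * gaussPdf n η z) *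
      Real.exp (-v))
      ≤ ∫ v in Set.Ioi (0:ℝ), (b * n) * (v * Real.exp (-v)) := by
        refine integral_mono_of_nonneg ?_ hGammaInt ?_
        · refine Filter.Eventually.of_forall fun v => ?_
          refine mul_nonneg ?_ (Real.exp_nonneg _)
          exact integral_nonneg fun z =>
            mul_nonneg (Finset.sum_nonneg fun i _ => sq_nonneg _)
              (gaussPdf_nonneg n η z)
        · refine (ae_restrict_mem measurableSet_Ioi).mono fun v hv => ?_
          have := mul_le_mul_of_nonneg_right (hinner v hv) (Real.exp_nonneg (-v))
          linarith [this]
    _ = (b * n) * ∫ v in Set.Ioi (0:ℝ), v * Real.exp (-v) := integral_const_mul _ _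
    _ = b * n := by rw [hGamma]; ring
    _ = 4 / Real.pi * L₀ ^ 2 * n := by rw [hb_def]
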